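/- Let a > 0, h > 0, u_0 ∈ ℝ, and let (Ŷ_k)_{k≥0} be the jump chain of the second-order stochastic Euler dynamics for the ODE u' = −au, i.e. Ŷ_0 = u_0 and Ŷ_k = (1 − a H_k + a² H_k²/2) Ŷ_{k−1} with independent H_k ∼ Exp(mean h). Then for every k ∈ ℕ₀: 𝔼[Ŷ_k²] = α^k · u_0², where α := 1 − 2ah + 4a²h² − 6a³h³ + 6a⁴h⁴. Moreover, |α| < 1 if and only if ah < (1/3)·(1 − (2/(5 + √29))^{1/3} + ((5 + √29)/2)^{1/3}); hence, for u_0 ≠ 0, 𝔼[Ŷ_k²] → 0 as k → ∞ exactly under this stepsize restriction (approximately ah < 0.7181). -/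

import Mathlib

/-!
`Ŷ_k` is `u₀` times a product of `k` independent copies of the stability factor
`R(H) = 1 − aH + a²H²/2`, so `𝔼[Ŷ_k²] = 𝔼[R(H)²]^k u₀²`, and `𝔼[R(H)²] = α` follows from the
exponential moments `𝔼[Hⁿ] = n! hⁿ`. With `z = ah` one has `α − 1 = 2z(3z³ − 3z² + 2z − 1)` and
`α > −1`, so `|α| < 1` exactly when `z` lies below the unique real root of this increasing cubic,
which Cardano's formula gives as the stated constant.
-/

open MeasureTheory ProbabilityTheory Real Set Filter Finset
open scoped Nat Topology

/-- The jump chain of the second-order stochastic Euler dynamics for `u' = −au`: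
`Ŷ_0 = u₀`, `Ŷ_k = (1 − a H_k + a² H_k²/2) Ŷ_{k−1}` (here `H i` stands for `H_{i+1}`). -/
noncomputable def eulerChain2 {Ω : Type*} (a u0 : ℝ) (H : ℕ → Ω → ℝ) : ℕ → Ω → ℝ
  | 0, _ => u0
  | (k + 1), ω => (1 - a * H k ω + a ^ 2 * (H k ω) ^ 2 / 2) * eulerChain2 a u0 H k ω

lemma integral_pow_mul_exp_neg_mul_Ioi {r : ℝ} (hr : 0 < r) (n : ℕ) :
    ∫ x in Ioi (0 : ℝ), x ^ n * exp (-(r * x)) = n ! / r ^ (n + 1) := by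
  have key := integral_rpow_mul_exp_neg_mul_Ioi (a := n + 1) (by positivity) hr
  simp only [add_sub_cancel_right, rpow_natCast] at key
  rw [key, Gamma_nat_eq_factorial, ← Nat.cast_succ, rpow_natCast, div_pow, one_pow,
    one_div_mul_eq_div]

lemma integral_expMeasure_eq {r : ℝ} (hr : 0 < r) (g : ℝ → ℝ) :
    ∫ x, g x ∂expMeasure r = ∫ x in Ioi 0, r * exp (-(r * x)) * g x := by
  rw [expMeasure, gammaMeasure, integral_withDensity_eq_integral_toReal_smul (f := gammaPDF 1 r)
    (measurable_gammaPDFReal 1 r).ennreal_ofReal (ae_of_all _ fun _ => ENNReal.ofReal_lt_top),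
    ← integral_Ici_eq_integral_Ioi, ← setIntegral_eq_integral_of_forall_compl_eq_zero]
  · refine setIntegral_congr_fun measurableSet_Ici fun x (hx : 0 ≤ x) => ?_
    simp [gammaPDF_of_nonneg hx, hr.le, (exp_pos _).le]
  · intro x (hx : ¬ 0 ≤ x)
    simp [gammaPDF_of_neg (not_le.mp hx)]

lemma integral_pow_expMeasure {r : ℝ} (hr : 0 < r) (n : ℕ) :
    ∫ x, x ^ n ∂expMeasure r = n ! / r ^ n := by
  simp_rw [integral_expMeasure_eq hr, mul_assoc, mul_comm (exp _), integral_const_mul,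
    integral_pow_mul_exp_neg_mul_Ioi hr, pow_succ]
  field_simp

lemma integrable_pow_expMeasure {r : ℝ} (hr : 0 < r) (n : ℕ) :
    Integrable (fun x : ℝ => x ^ n) (expMeasure r) :=
  .of_integral_ne_zero (by rw [integral_pow_expMeasure hr]; positivity)

lemma integral_polynomial_expMeasure {r : ℝ} (hr : 0 < r) {n : ℕ} (c : Fin n → ℝ) :
    ∫ x, ∑ i, c i * x ^ (i : ℕ) ∂expMeasure r = ∑ i, c i * ((i : ℕ) ! / r ^ (i : ℕ)) := by
  rw [integral_finsetSum _ fun (i : Fin n) _ => (integrable_pow_expMeasure hr i).const_mul (c i)]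
  simp_rw [integral_const_mul, integral_pow_expMeasure hr]

lemma ProbabilityTheory.iIndepFun.integral_prod_range_comp_eq_pow {Ω 𝓧 : Type*}
    {mΩ : MeasurableSpace Ω} {m𝓧 : MeasurableSpace 𝓧} {μ : Measure Ω} {ν : Measure 𝓧} [NeZero ν]
    {X : ℕ → Ω → 𝓧} (hX : iIndepFun X μ) (hXν : ∀ i, μ.map (X i) = ν) {f : 𝓧 → ℝ}
    (hf : AEStronglyMeasurable f ν) (k : ℕ) :
    ∫ ω, ∏ i ∈ range k, f (X i ω) ∂μ = (∫ x, f x ∂ν) ^ k := by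
  have hXm : ∀ i, AEMeasurable (X i) μ := fun i =>
    .of_map_ne_zero (by rw [hXν i]; exact NeZero.ne ν)
  simp_rw [prod_range]
  rw [(hX.precomp Fin.val_injective).integral_fun_prod_comp (fun i => hXm i)
    (fun i => by rw [hXν]; exact hf)]
  simp_rw [← integral_map (hXm _) (hXν _ ▸ hf), hXν, prod_const, card_univ, Fintype.card_fin]

noncomputable def stabilityFactor (a x : ℝ) : ℝ := 1 - a * x + a ^ 2 * x ^ 2 / 2

lemma eulerChain2_eq_prod {Ω : Type*} (a u0 : ℝ) (H : ℕ → Ω → ℝ) (k : ℕ) (ω : Ω) :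
    eulerChain2 a u0 H k ω = (∏ i ∈ range k, stabilityFactor a (H i ω)) * u0 := by
  induction k with
  | zero => simp [eulerChain2]
  | succ k ih => rw [eulerChain2, ih, prod_range_succ, stabilityFactor]; ring

def meanSquareFactor (z : ℝ) : ℝ := 1 - 2 * z + 4 * z ^ 2 - 6 * z ^ 3 + 6 * z ^ 4

lemma integral_stabilityFactor_sq_expMeasure (a : ℝ) {h : ℝ} (hh : 0 < h) :
    ∫ x, stabilityFactor a x ^ 2 ∂expMeasure h⁻¹ = meanSquareFactor (a * h) := by
  have hpoly : (fun x => stabilityFactor a x ^ 2) =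
      fun x => ∑ i : Fin 5, ![1, -(2 * a), 2 * a ^ 2, -a ^ 3, a ^ 4 / 4] i * x ^ (i : ℕ) := by
    funext x
    simp [stabilityFactor, Fin.sum_univ_five]
    ring
  rw [hpoly, integral_polynomial_expMeasure (inv_pos.2 hh)]
  simp [Fin.sum_univ_five, meanSquareFactor, Nat.factorial]
  ring

lemma integral_eulerChain2_sq {Ω : Type*} {mΩ : MeasurableSpace Ω} {P : Measure Ω}
    (a u0 : ℝ) {h : ℝ} (hh : 0 < h) {H : ℕ → Ω → ℝ} (hH : iIndepFun H P)
    (hHdist : ∀ k, P.map (H k) = expMeasure h⁻¹) (k : ℕ) :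
    ∫ ω, eulerChain2 a u0 H k ω ^ 2 ∂P = meanSquareFactor (a * h) ^ k * u0 ^ 2 := by
  have := isProbabilityMeasure_expMeasure (inv_pos.2 hh)
  have hcont : Continuous fun x => stabilityFactor a x ^ 2 := by
    unfold stabilityFactor; fun_prop
  simp_rw [eulerChain2_eq_prod, mul_pow, ← Finset.prod_pow]
  rw [integral_mul_const, hH.integral_prod_range_comp_eq_pow hHdist hcont.aestronglyMeasurable,
    integral_stabilityFactor_sq_expMeasure a hh]

noncomputable def criticalStepsize : ℝ :=
  (1 / 3) * (1 - (2 / (5 + √29)) ^ ((1 : ℝ) / 3) + ((5 + √29) / 2) ^ ((1 : ℝ) / 3))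

-- Cardano: with `t³ = (5 + √29)/2` one has `t⁻³ = (√29 - 5)/2`, so `y = t - t⁻¹` solves
-- `y³ + 3y = 5`, and `criticalStepsize = (1 + y)/3`.
lemma criticalStepsize_isRoot :
    3 * criticalStepsize ^ 3 - 3 * criticalStepsize ^ 2 + 2 * criticalStepsize - 1 = 0 := by
  set t : ℝ := ((5 + √29) / 2) ^ ((1 : ℝ) / 3)
  have hb : (0 : ℝ) < (5 + √29) / 2 := by positivity
  have ht : 0 < t := by positivity
  have ht3 : t ^ 3 = (5 + √29) / 2 := by
    rw [← rpow_natCast, ← rpow_mul hb.le]; norm_num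
  have hinv : (2 / (5 + √29)) ^ ((1 : ℝ) / 3) = t⁻¹ := by
    rw [← inv_div, inv_rpow hb.le]
  have hinv3 : t⁻¹ ^ 3 = (√29 - 5) / 2 := by
    have h29 : √29 ^ 2 = 29 := sq_sqrt (by norm_num)
    rw [inv_pow, ht3, inv_div, div_eq_div_iff (by positivity) two_ne_zero]
    linear_combination -h29
  have hy : (t - t⁻¹) ^ 3 + 3 * (t - t⁻¹) = 5 := by
    linear_combination ht3 - hinv3 - 3 * (t - t⁻¹) * mul_inv_cancel₀ ht.ne'
  rw [criticalStepsize, hinv]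
  linear_combination hy / 9

lemma strictMono_cubic : StrictMono fun z : ℝ => 3 * z ^ 3 - 3 * z ^ 2 + 2 * z - 1 := by
  intro u v huv
  nlinarith [mul_nonneg (sub_pos.2 huv).le (sq_nonneg (u + v - 1)),
    mul_nonneg (sub_pos.2 huv).le (sq_nonneg u), mul_nonneg (sub_pos.2 huv).le (sq_nonneg v)]

lemma neg_one_lt_meanSquareFactor (z : ℝ) : -1 < meanSquareFactor z := by
  unfold meanSquareFactor
  nlinarith [sq_nonneg (z ^ 2 - z / 2), sq_nonneg (z - 2 / 5), sq_nonneg z]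

lemma abs_meanSquareFactor_lt_one_iff {z : ℝ} (hz : 0 < z) :
    |meanSquareFactor z| < 1 ↔ z < criticalStepsize := by
  have hfactor : meanSquareFactor z - 1 = 2 * z * (3 * z ^ 3 - 3 * z ^ 2 + 2 * z - 1) := by
    unfold meanSquareFactor; ring
  rw [abs_lt, and_iff_right (neg_one_lt_meanSquareFactor z), ← sub_neg, hfactor,
    ← mul_zero (2 * z), mul_lt_mul_iff_of_pos_left (by positivity), ← criticalStepsize_isRoot,
    strictMono_cubic.lt_iff_lt]

lemma tendsto_pow_mul_const_nhds_zero_iff {r c : ℝ} (hc : c ≠ 0) :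
    Tendsto (fun k : ℕ => r ^ k * c) atTop (𝓝 0) ↔ |r| < 1 := by
  simp_rw [mul_comm _ c, ← smul_eq_mul]
  rw [← smul_zero c, tendsto_const_smul_iff₀ hc, tendsto_pow_atTop_nhds_zero_iff]

theorem stmt19_general {Ω : Type*} [MeasurableSpace Ω] (P : Measure Ω) [IsProbabilityMeasure P]
    (a h u0 : ℝ) (ha : 0 < a) (hh : 0 < h)
    (H : ℕ → Ω → ℝ)
    (hHindep : iIndepFun H P)
    (hHdist : ∀ k, Measure.map (H k) P = expMeasure h⁻¹) :
    (∀ k : ℕ, ∫ ω, (eulerChain2 a u0 H k ω) ^ 2 ∂P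
        = (1 - 2 * a * h + 4 * a ^ 2 * h ^ 2 - 6 * a ^ 3 * h ^ 3 + 6 * a ^ 4 * h ^ 4) ^ k
            * u0 ^ 2) ∧
      (|1 - 2 * a * h + 4 * a ^ 2 * h ^ 2 - 6 * a ^ 3 * h ^ 3 + 6 * a ^ 4 * h ^ 4| < 1 ↔
        a * h < (1 / 3) * (1 - (2 / (5 + Real.sqrt 29)) ^ ((1 : ℝ) / 3)
          + ((5 + Real.sqrt 29) / 2) ^ ((1 : ℝ) / 3))) ∧
      (u0 ≠ 0 →
        (Filter.Tendsto (fun k : ℕ => ∫ ω, (eulerChain2 a u0 H k ω) ^ 2 ∂P)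
            Filter.atTop (nhds 0) ↔
          a * h < (1 / 3) * (1 - (2 / (5 + Real.sqrt 29)) ^ ((1 : ℝ) / 3)
            + ((5 + Real.sqrt 29) / 2) ^ ((1 : ℝ) / 3)))) := by
  have hα : 1 - 2 * a * h + 4 * a ^ 2 * h ^ 2 - 6 * a ^ 3 * h ^ 3 + 6 * a ^ 4 * h ^ 4
      = meanSquareFactor (a * h) := by
    unfold meanSquareFactor; ring
  have hmean := integral_eulerChain2_sq (P := P) a u0 hh hHindep hHdist
  have hstable : |meanSquareFactor (a * h)| < 1 ↔ a * h < criticalStepsize :=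
    abs_meanSquareFactor_lt_one_iff (mul_pos ha hh)
  rw [hα]
  refine ⟨hmean, hstable, fun hu0 => ?_⟩
  simp_rw [hmean]
  exact (tendsto_pow_mul_const_nhds_zero_iff (pow_ne_zero 2 hu0)).trans hstable

/-- `𝔼[Ŷ_k²] = α^k u₀²` with `α = 1 − 2ah + 4a²h² − 6a³h³ + 6a⁴h⁴`; moreover `|α| < 1` iff
`ah < (1/3)(1 − (2/(5+√29))^{1/3} + ((5+√29)/2)^{1/3})`, and for `u₀ ≠ 0`, `𝔼[Ŷ_k²] → 0`
exactly under this stepsize restriction. -/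
theorem stmt19 {Ω : Type*} [MeasurableSpace Ω] (P : Measure Ω) [IsProbabilityMeasure P]
    (a h u0 : ℝ) (ha : 0 < a) (hh : 0 < h)
    (H : ℕ → Ω → ℝ) (hHmeas : ∀ k, Measurable (H k))
    (hHindep : iIndepFun H P)
    (hHdist : ∀ k, Measure.map (H k) P = expMeasure h⁻¹) :
    (∀ k : ℕ, ∫ ω, (eulerChain2 a u0 H k ω) ^ 2 ∂P
        = (1 - 2 * a * h + 4 * a ^ 2 * h ^ 2 - 6 * a ^ 3 * h ^ 3 + 6 * a ^ 4 * h ^ 4) ^ k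
            * u0 ^ 2) ∧
      (|1 - 2 * a * h + 4 * a ^ 2 * h ^ 2 - 6 * a ^ 3 * h ^ 3 + 6 * a ^ 4 * h ^ 4| < 1 ↔
        a * h < (1 / 3) * (1 - (2 / (5 + Real.sqrt 29)) ^ ((1 : ℝ) / 3)
          + ((5 + Real.sqrt 29) / 2) ^ ((1 : ℝ) / 3))) ∧
      (u0 ≠ 0 →
        (Filter.Tendsto (fun k : ℕ => ∫ ω, (eulerChain2 a u0 H k ω) ^ 2 ∂P)
            Filter.atTop (nhds 0) ↔
          a * h < (1 / 3) * (1 - (2 / (5 + Real.sqrt 29)) ^ ((1 : ℝ) / 3)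
            + ((5 + Real.sqrt 29) / 2) ^ ((1 : ℝ) / 3)))) :=
  stmt19_general P a h u0 ha hh H hHindep hHdist
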